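/- arXiv:2603.29073 — 6 statements merged into one kernel-verified Lean document; each statement's English description precedes it below -/
import Mathlib

section
/- Let P ∈ ℤ[x₁,…,x_n] be a nonzero polynomial and let ε : Fin n → ℤ satisfy ε i ∈ {1, −1} for all i. Then the following are equivalent: (i) for every y ∈ L such that φ_P(y) ∈ L, the element ev_ε(y) lies in the polynomial subring ℤ[t] of ℚ(t); (ii) the evaluation P(ε) equals 0. (This is the algebraic core of the main theorem: with the specialisation making an exchange polynomial vanish, every Laurent polynomial that remains Laurent after the mutation substitution t ↦ P/t specialises to an honest polynomial in t, and conversely.) -/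
/-- The ambient field: the field of fractions of `ℤ[t, x₁, …, xₙ]`, where the
variable indexed by `0` plays the role of `t` and the variable indexed by
`i.succ` plays the role of `xᵢ`. -/
abbrev Kk (n : ℕ) : Type := FractionRing (MvPolynomial (Fin (n + 1)) ℤ)

/-- The image of the `k`-th variable in the field of fractions. -/
noncomputable def XX (n : ℕ) (k : Fin (n + 1)) : Kk n :=
  algebraMap (MvPolynomial (Fin (n + 1)) ℤ) (Kk n) (MvPolynomial.X k)

/-- The Laurent subring `ℤ[t^{±1}, x₁^{±1}, …, xₙ^{±1}]` of `Kk n`: the subring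
generated by all the variables together with their inverses. -/
noncomputable def LL (n : ℕ) : Subring (Kk n) :=
  Subring.closure (Set.range (XX n) ∪ Set.range fun k => (XX n k)⁻¹)

/-- The field of fractions `ℚ(t)` of `ℤ[t]`. -/
abbrev Ft : Type := FractionRing (Polynomial ℤ)

/-- The image of the variable `t` in `ℚ(t)`. -/
noncomputable def tF : Ft := algebraMap (Polynomial ℤ) Ft Polynomial.X

set_option maxHeartbeats 1000000
set_option synthInstance.maxHeartbeats 1000000

open MvPolynomial

abbrev Rr (n : ℕ) := MvPolynomial (Fin (n + 1)) ℤ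
abbrev Ss (n : ℕ) := MvPolynomial (Fin n) ℤ

variable {n : ℕ}

lemma amap_injective : Function.Injective (algebraMap (Rr n) (Kk n)) :=
  IsFractionRing.injective _ _

lemma tmap_injective : Function.Injective (algebraMap (Polynomial ℤ) Ft) :=
  IsFractionRing.injective _ _

lemma XX_ne_zero (k : Fin (n+1)) : XX n k ≠ 0 := by
  simp only [XX, Ne, map_eq_zero_iff _ amap_injective]
  exact MvPolynomial.X_ne_zero k

lemma tF_ne_zero : tF ≠ 0 := by
  simp only [tF, Ne, map_eq_zero_iff _ tmap_injective]
  exact Polynomial.X_ne_zero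

lemma algebraMap_mem_LL (f : Rr n) : algebraMap (Rr n) (Kk n) f ∈ LL n := by
  induction f using MvPolynomial.induction_on with
  | C z =>
    have : algebraMap (Rr n) (Kk n) (MvPolynomial.C z) = (z : Kk n) := by
      rw [eq_intCast (MvPolynomial.C : ℤ →+* Rr n) z, map_intCast]
    rw [this]
    exact intCast_mem _ _
  | add p q hp hq => rw [map_add]; exact add_mem hp hq
  | mul_X p k hp =>
    rw [map_mul]
    exact mul_mem hp (Subring.subset_closure (Or.inl ⟨k, rfl⟩))

lemma XX_mem_LL (k : Fin (n+1)) : XX n k ∈ LL n :=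
  Subring.subset_closure (Or.inl ⟨k, rfl⟩)

lemma XX_inv_mem_LL (k : Fin (n+1)) : (XX n k)⁻¹ ∈ LL n :=
  Subring.subset_closure (Or.inr ⟨k, rfl⟩)

/-- The common denominator. -/
noncomputable def dd (n : ℕ) : Rr n := ∏ k, MvPolynomial.X k

lemma LL_repr {y : Kk n} (hy : y ∈ LL n) :
    ∃ (f : Rr n) (a : ℕ),
      y * (algebraMap (Rr n) (Kk n) (dd n)) ^ a = algebraMap (Rr n) (Kk n) f := by
  induction hy using Subring.closure_induction with
  | mem x hx =>
    rcases hx with ⟨k, rfl⟩ | ⟨k, rfl⟩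
    · exact ⟨MvPolynomial.X k, 0, by simp [XX]⟩
    · refine ⟨∏ j ∈ Finset.univ.erase k, MvPolynomial.X j, 1, ?_⟩
      rw [pow_one]
      rw [show (dd n : Rr n) = MvPolynomial.X k * ∏ j ∈ Finset.univ.erase k, MvPolynomial.X j from
        (Finset.mul_prod_erase _ _ (Finset.mem_univ k)).symm]
      rw [map_mul, ← mul_assoc]
      show (XX n k)⁻¹ * XX n k * _ = _
      rw [inv_mul_cancel₀ (XX_ne_zero k), one_mul]
  | zero => exact ⟨0, 0, by simp⟩
  | one => exact ⟨1, 0, by simp⟩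
  | add x y hx hy ihx ihy =>
    obtain ⟨f, a, hf⟩ := ihx
    obtain ⟨g, b, hg⟩ := ihy
    refine ⟨f * dd n ^ b + g * dd n ^ a, a + b, ?_⟩
    rw [map_add, map_mul, map_mul, map_pow, map_pow, ← hf, ← hg]
    ring
  | neg x hx ih =>
    obtain ⟨f, a, hf⟩ := ih
    exact ⟨-f, a, by rw [map_neg, ← hf]; ring⟩
  | mul x y hx hy ihx ihy =>
    obtain ⟨f, a, hf⟩ := ihx
    obtain ⟨g, b, hg⟩ := ihy
    refine ⟨f * g, a + b, ?_⟩
    rw [map_mul, ← hf, ← hg]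
    ring

/-- `x ↦ ε`, `t ↦ t` evaluation into `ℤ[t]`. -/
noncomputable def ψh (n : ℕ) (ε : Fin n → ℤ) : Rr n →+* Polynomial ℤ :=
  MvPolynomial.eval₂Hom (Int.castRingHom (Polynomial ℤ))
    (fun k => Fin.cases Polynomial.X (fun i => Polynomial.C (ε i)) k)

/-- `t ↦ P/t` substitution into `Kk n`. -/
noncomputable def χh (n : ℕ) (P : MvPolynomial (Fin n) ℤ) : Rr n →+* Kk n :=
  MvPolynomial.eval₂Hom (Int.castRingHom (Kk n))
    (fun k => Fin.cases
      (algebraMap (Rr n) (Kk n) (MvPolynomial.rename Fin.succ P) / XX n 0)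
      (fun i => XX n i.succ) k)

lemma ev_poly {ev : LL n →+* Ft} {ε : Fin n → ℤ}
    (hevt : ∀ z : LL n, (z : Kk n) = XX n 0 → ev z = tF)
    (hevx : ∀ (i : Fin n) (z : LL n), (z : Kk n) = XX n i.succ → ev z = (ε i : Ft)) :
    ∀ (f : Rr n) (z : LL n), (z : Kk n) = algebraMap (Rr n) (Kk n) f →
      ev z = algebraMap (Polynomial ℤ) Ft (ψh n ε f) := by
  intro f
  induction f using MvPolynomial.induction_on with
  | C m =>
    intro z hz
    have hz' : z = (m : LL n) := by
      apply Subtype.ext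
      rw [hz, eq_intCast (MvPolynomial.C : ℤ →+* Rr n) m, map_intCast]
      simp
    rw [hz', map_intCast, ψh, eval₂Hom_C, eq_intCast (Int.castRingHom (Polynomial ℤ)),
      map_intCast]
  | add p q hp hq =>
    intro z hz
    have hz' : z = (⟨_, algebraMap_mem_LL p⟩ : LL n) + ⟨_, algebraMap_mem_LL q⟩ := by
      apply Subtype.ext
      rw [hz, map_add]
      rfl
    rw [hz', map_add, hp _ rfl, hq _ rfl, map_add, ← map_add]
  | mul_X p k hp =>
    intro z hz
    have hz' : z = (⟨_, algebraMap_mem_LL p⟩ : LL n) * ⟨_, XX_mem_LL k⟩ := by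
      apply Subtype.ext
      rw [hz, map_mul]
      rfl
    have hX : ev ⟨_, XX_mem_LL k⟩ =
        algebraMap (Polynomial ℤ) Ft (ψh n ε (MvPolynomial.X k)) := by
      rcases Fin.eq_zero_or_eq_succ k with rfl | ⟨i, rfl⟩
      · rw [hevt _ rfl, ψh, eval₂Hom_X']
        simp [tF]
      · rw [hevx i _ rfl, ψh, eval₂Hom_X']
        simp only [Fin.cases_succ]
        rw [eq_intCast (Polynomial.C : ℤ →+* Polynomial ℤ) (ε i), map_intCast]
    rw [hz', map_mul, hp _ rfl, hX, ← map_mul, ← map_mul]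

lemma φ_poly {φ : LL n →+* Kk n} {P : MvPolynomial (Fin n) ℤ}
    (hφx : ∀ (i : Fin n) (z : LL n), (z : Kk n) = XX n i.succ → φ z = XX n i.succ)
    (hφt : ∀ z : LL n, (z : Kk n) = XX n 0 →
      (φ z : Kk n) =
        algebraMap (Rr n) (Kk n) (MvPolynomial.rename Fin.succ P) / XX n 0) :
    ∀ (f : Rr n) (z : LL n), (z : Kk n) = algebraMap (Rr n) (Kk n) f →
      φ z = χh n P f := by
  intro f
  induction f using MvPolynomial.induction_on with
  | C m =>
    intro z hz
    have hz' : z = (m : LL n) := by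
      apply Subtype.ext
      rw [hz, eq_intCast (MvPolynomial.C : ℤ →+* Rr n) m, map_intCast]
      simp
    rw [hz', map_intCast, χh, eval₂Hom_C, eq_intCast (Int.castRingHom (Kk n))]
  | add p q hp hq =>
    intro z hz
    have hz' : z = (⟨_, algebraMap_mem_LL p⟩ : LL n) + ⟨_, algebraMap_mem_LL q⟩ := by
      apply Subtype.ext
      rw [hz, map_add]
      rfl
    rw [hz', map_add, hp _ rfl, hq _ rfl, ← map_add]
  | mul_X p k hp =>
    intro z hz
    have hz' : z = (⟨_, algebraMap_mem_LL p⟩ : LL n) * ⟨_, XX_mem_LL k⟩ := by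
      apply Subtype.ext
      rw [hz, map_mul]
      rfl
    have hX : φ ⟨_, XX_mem_LL k⟩ = χh n P (MvPolynomial.X k) := by
      rcases Fin.eq_zero_or_eq_succ k with rfl | ⟨i, rfl⟩
      · rw [hφt _ rfl, χh, eval₂Hom_X']
        simp
      · rw [hφx i _ rfl, χh, eval₂Hom_X']
        simp
    rw [hz', map_mul, hp _ rfl, hX, ← map_mul]

lemma E_rename (s : Ss n) :
    MvPolynomial.finSuccEquiv ℤ n (MvPolynomial.rename Fin.succ s) = Polynomial.C s := by
  rw [finSuccEquiv_apply, eval₂Hom_rename]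
  have h1 : ((fun i => Fin.cases Polynomial.X (fun k => Polynomial.C (MvPolynomial.X k)) i :
      Fin (n+1) → Polynomial (Ss n)) ∘ Fin.succ) = fun i => Polynomial.C (MvPolynomial.X i) := by
    funext i
    simp
  rw [h1]
  have h2 : ∀ s : Ss n,
      eval₂Hom ((Polynomial.C : Ss n →+* Polynomial (Ss n)).comp MvPolynomial.C)
        (fun i => Polynomial.C (MvPolynomial.X i)) s = Polynomial.C s := by
    intro s
    rw [show (fun i => Polynomial.C (MvPolynomial.X i : Ss n)) =
        ((Polynomial.C : Ss n →+* Polynomial (Ss n)) ∘ fun i => (MvPolynomial.X i : Ss n))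
        from rfl, coe_eval₂Hom, ← eval₂_comp_left, eval₂_eta]
  exact h2 s

lemma ψ_rename (ε : Fin n → ℤ) (s : Ss n) :
    ψh n ε (MvPolynomial.rename Fin.succ s) = Polynomial.C (MvPolynomial.eval ε s) := by
  rw [ψh, eval₂Hom_rename]
  have h1 : ((fun k => Fin.cases Polynomial.X (fun i => Polynomial.C (ε i)) k :
      Fin (n+1) → Polynomial ℤ) ∘ Fin.succ) = fun i => Polynomial.C (ε i) := by
    funext i; simp
  rw [h1]
  have h2 : (Int.castRingHom (Polynomial ℤ)) =
      (Polynomial.C : ℤ →+* Polynomial ℤ).comp (RingHom.id ℤ) := Subsingleton.elim _ _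
  rw [h2, show (fun i => Polynomial.C (ε i)) =
      ((Polynomial.C : ℤ →+* Polynomial ℤ) ∘ ε) from rfl, coe_eval₂Hom, ← eval₂_comp_left]
  rfl

lemma algebraMap_eq_eval₂ :
    (algebraMap (Rr n) (Kk n)) = eval₂Hom (Int.castRingHom (Kk n)) (XX n) := by
  apply MvPolynomial.ringHom_ext
  · intro m
    rw [eval₂Hom_C, eq_intCast (MvPolynomial.C : ℤ →+* Rr n) m, map_intCast,
      eq_intCast (Int.castRingHom (Kk n))]
  · intro k
    rw [eval₂Hom_X']
    rfl

lemma χ_rename (P : MvPolynomial (Fin n) ℤ) (s : Ss n) :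
    χh n P (MvPolynomial.rename Fin.succ s)
      = algebraMap (Rr n) (Kk n) (MvPolynomial.rename Fin.succ s) := by
  rw [χh, eval₂Hom_rename]
  conv_rhs => rw [algebraMap_eq_eval₂, eval₂Hom_rename]
  have h1 : ((fun k => Fin.cases
      (algebraMap (Rr n) (Kk n) (MvPolynomial.rename Fin.succ P) / XX n 0)
      (fun i => XX n i.succ) k : Fin (n+1) → Kk n) ∘ Fin.succ) = (XX n ∘ Fin.succ) := by
    funext i
    simp
  rw [h1]

lemma χ_X0 (P : MvPolynomial (Fin n) ℤ) :
    χh n P (MvPolynomial.X 0)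
      = algebraMap (Rr n) (Kk n) (MvPolynomial.rename Fin.succ P) / XX n 0 := by
  rw [χh, eval₂Hom_X']
  simp

lemma ψ_X0 (ε : Fin n → ℤ) : ψh n ε (MvPolynomial.X 0) = Polynomial.X := by
  rw [ψh, eval₂Hom_X']
  simp

lemma f_decomp (f : Rr n) :
    f = ∑ k ∈ Finset.range ((MvPolynomial.finSuccEquiv ℤ n f).natDegree + 1),
        MvPolynomial.rename Fin.succ ((MvPolynomial.finSuccEquiv ℤ n f).coeff k)
          * MvPolynomial.X 0 ^ k := by
  apply (MvPolynomial.finSuccEquiv ℤ n).injective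
  rw [map_sum]
  conv_lhs => rw [(MvPolynomial.finSuccEquiv ℤ n f).as_sum_range' _ (Nat.lt_succ_self _)]
  refine Finset.sum_congr rfl fun k _ => ?_
  rw [map_mul, map_pow, E_rename, finSuccEquiv_X_zero, Polynomial.C_mul_X_pow_eq_monomial]

lemma dd_eq : dd n = MvPolynomial.X 0
    * MvPolynomial.rename Fin.succ (∏ i : Fin n, MvPolynomial.X i) := by
  rw [dd, Fin.prod_univ_succ, map_prod]
  simp

/-- Let `P ∈ ℤ[x₁,…,xₙ]` be nonzero and let `ε : Fin n → ℤ`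
take values in `{1, -1}`.  Let `φ` be the (unique) ring homomorphism
`L → K` fixing each `xᵢ` and sending `t ↦ P / t`, and let `ev` be the (unique)
ring homomorphism `L → ℚ(t)` fixing `t` and sending each `xᵢ` to `ε i`.
Then every `y ∈ L` with `φ y ∈ L` satisfies `ev y ∈ ℤ[t]`, if and only if
`P(ε) = 0`. -/
theorem stmt_0 (n : ℕ) (hn : 1 ≤ n)
    (P : MvPolynomial (Fin n) ℤ) (hP : P ≠ 0)
    (ε : Fin n → ℤ) (hε : ∀ i, ε i = 1 ∨ ε i = -1)
    (φ : LL n →+* Kk n)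
    (hφx : ∀ (i : Fin n) (z : LL n), (z : Kk n) = XX n i.succ → φ z = XX n i.succ)
    (hφt : ∀ z : LL n, (z : Kk n) = XX n 0 →
      (φ z : Kk n) =
        algebraMap (MvPolynomial (Fin (n + 1)) ℤ) (Kk n)
          (MvPolynomial.rename Fin.succ P) / XX n 0)
    (ev : LL n →+* Ft)
    (hevt : ∀ z : LL n, (z : Kk n) = XX n 0 → ev z = tF)
    (hevx : ∀ (i : Fin n) (z : LL n), (z : Kk n) = XX n i.succ → ev z = (ε i : Ft)) :
    (∀ y : LL n, (φ y : Kk n) ∈ LL n →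
        ev y ∈ (algebraMap (Polynomial ℤ) Ft).range) ↔
      MvPolynomial.eval ε P = 0 := by
  classical
  have hPrne : MvPolynomial.rename Fin.succ P ≠ 0 := fun h => hP <|
    MvPolynomial.rename_injective Fin.succ (Fin.succ_injective n)
      (by rw [h, map_zero])
  have hPralg : algebraMap (Rr n) (Kk n) (MvPolynomial.rename Fin.succ P) ≠ 0 := by
    rw [Ne, map_eq_zero_iff _ amap_injective]; exact hPrne
  constructor
  · -- forward direction
    intro hmain
    set zPr : LL n := ⟨algebraMap (Rr n) (Kk n) (MvPolynomial.rename Fin.succ P),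
      algebraMap_mem_LL _⟩ with hzPr
    set zX : LL n := ⟨XX n 0, XX_mem_LL 0⟩ with hzX
    set zXi : LL n := ⟨(XX n 0)⁻¹, XX_inv_mem_LL 0⟩ with hzXi
    have hXXi : zXi * zX = 1 := by
      apply Subtype.ext
      show (XX n 0)⁻¹ * XX n 0 = 1
      exact inv_mul_cancel₀ (XX_ne_zero 0)
    have hφzX : (φ zX : Kk n)
        = algebraMap (Rr n) (Kk n) (MvPolynomial.rename Fin.succ P) / XX n 0 := hφt zX rfl
    have hφzXi : φ zXi = (algebraMap (Rr n) (Kk n) (MvPolynomial.rename Fin.succ P) / XX n 0)⁻¹ := by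
      have h1 : φ zXi * φ zX = 1 := by rw [← map_mul, hXXi, map_one]
      rw [hφzX] at h1
      exact eq_inv_of_mul_eq_one_left h1
    have hφzPr : φ zPr = algebraMap (Rr n) (Kk n) (MvPolynomial.rename Fin.succ P) := by
      rw [φ_poly hφx hφt (MvPolynomial.rename Fin.succ P) zPr rfl, χ_rename]
    have hφy0 : (φ (zPr * zXi) : Kk n) = XX n 0 := by
      rw [map_mul, hφzPr, hφzXi, inv_div]
      rw [mul_div_assoc', mul_comm, mul_div_assoc, div_self hPralg, mul_one]
    obtain ⟨h, hh⟩ := hmain (zPr * zXi) (by rw [hφy0]; exact XX_mem_LL 0)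
    have hevzPr : ev zPr = algebraMap (Polynomial ℤ) Ft (Polynomial.C (MvPolynomial.eval ε P)) := by
      rw [ev_poly hevt hevx (MvPolynomial.rename Fin.succ P) zPr rfl, ψ_rename]
    have hevzXi : ev zXi = tF⁻¹ := by
      have h1 : ev zXi * ev zX = 1 := by rw [← map_mul, hXXi, map_one]
      rw [hevt zX rfl] at h1
      exact eq_inv_of_mul_eq_one_left h1
    have hev0 : algebraMap (Polynomial ℤ) Ft h
        = algebraMap (Polynomial ℤ) Ft (Polynomial.C (MvPolynomial.eval ε P)) * tF⁻¹ := by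
      rw [hh, map_mul, hevzPr, hevzXi]
    have hkey : algebraMap (Polynomial ℤ) Ft (h * Polynomial.X)
        = algebraMap (Polynomial ℤ) Ft (Polynomial.C (MvPolynomial.eval ε P)) := by
      rw [map_mul, hev0, mul_assoc]
      rw [show algebraMap (Polynomial ℤ) Ft Polynomial.X = tF from rfl]
      rw [inv_mul_cancel₀ tF_ne_zero, mul_one]
    have := tmap_injective hkey
    have hc := congrArg (fun p => Polynomial.coeff p 0) this
    simpa [Polynomial.coeff_mul_X_zero] using hc.symm
  · -- backward direction
    intro hPε y hy
    obtain ⟨f, a, hf⟩ := LL_repr y.2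
    obtain ⟨g, b, hg⟩ := LL_repr hy
    obtain ⟨N, c, hfd⟩ : ∃ (N : ℕ) (c : ℕ → Ss n), f = ∑ k ∈ Finset.range (N+1),
        MvPolynomial.rename Fin.succ (c k) * MvPolynomial.X 0 ^ k :=
      ⟨(MvPolynomial.finSuccEquiv ℤ n f).natDegree,
        fun k => (MvPolynomial.finSuccEquiv ℤ n f).coeff k, f_decomp f⟩
    -- the sign unit
    have huu : MvPolynomial.eval ε (∏ i : Fin n, MvPolynomial.X i : Ss n)
        * MvPolynomial.eval ε (∏ i : Fin n, MvPolynomial.X i : Ss n) = 1 := by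
      rw [map_prod, ← Finset.prod_mul_distrib]
      refine Finset.prod_eq_one fun i _ => ?_
      rw [MvPolynomial.eval_X]
      rcases hε i with h | h <;> rw [h] <;> norm_num
    have hune : MvPolynomial.eval ε (∏ i : Fin n, MvPolynomial.X i : Ss n) ≠ 0 := by
      intro h; rw [h, mul_zero] at huu; exact zero_ne_one huu
    set dL : LL n := ⟨algebraMap (Rr n) (Kk n) (dd n), algebraMap_mem_LL _⟩ with hdL
    have hyd : ((y * dL ^ a : LL n) : Kk n) = algebraMap (Rr n) (Kk n) f := by
      push_cast [hdL]
      exact hf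
    -- ev side
    have hev : ev y * (algebraMap (Polynomial ℤ) Ft (ψh n ε (dd n))) ^ a
        = algebraMap (Polynomial ℤ) Ft (ψh n ε f) := by
      have h1 := ev_poly hevt hevx f (y * dL ^ a) hyd
      have h2 := ev_poly hevt hevx (dd n) dL rfl
      rw [map_mul, map_pow, h2] at h1
      exact h1
    have hψdd : ψh n ε (dd n) = Polynomial.X
        * Polynomial.C (MvPolynomial.eval ε (∏ i : Fin n, MvPolynomial.X i : Ss n)) := by
      rw [dd_eq, map_mul, ψ_X0, ψ_rename]
    -- φ side
    have hφf : χh n P f = φ y * (χh n P (dd n)) ^ a := by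
      have h1 := φ_poly hφx hφt f (y * dL ^ a) hyd
      have h2 := φ_poly hφx hφt (dd n) dL rfl
      rw [map_mul, map_pow, h2] at h1
      exact h1.symm
    have hχdd : χh n P (dd n)
        = algebraMap (Rr n) (Kk n) (MvPolynomial.rename Fin.succ P) / XX n 0
          * algebraMap (Rr n) (Kk n)
              (MvPolynomial.rename Fin.succ (∏ i : Fin n, MvPolynomial.X i)) := by
      rw [dd_eq, map_mul, χ_X0, χ_rename]
    -- the cleared numerator
    have hχf : χh n P f * XX n 0 ^ N
        = algebraMap (Rr n) (Kk n) (∑ k ∈ Finset.range (N+1),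
            MvPolynomial.rename Fin.succ (c k) * MvPolynomial.rename Fin.succ P ^ k
              * MvPolynomial.X 0 ^ (N - k)) := by
      conv_lhs => rw [hfd]
      rw [map_sum, Finset.sum_mul, map_sum]
      refine Finset.sum_congr rfl fun k hk => ?_
      have hkN : k ≤ N := Nat.lt_succ_iff.mp (Finset.mem_range.mp hk)
      rw [map_mul, map_pow, χ_rename, χ_X0, map_mul, map_mul, map_pow, map_pow]
      rw [mul_assoc, mul_assoc]
      congr 1
      rw [div_pow, show XX n 0 ^ N = XX n 0 ^ k * XX n 0 ^ (N - k) from by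
        rw [← pow_add, Nat.add_sub_cancel' hkN], ← mul_assoc,
        div_mul_cancel₀ _ (pow_ne_zero k (XX_ne_zero 0))]
      rw [show (algebraMap (Rr n) (Kk n)) (MvPolynomial.X (0 : Fin (n+1))) = XX n 0 from rfl]
    have keyK : algebraMap (Rr n) (Kk n) ((∑ k ∈ Finset.range (N+1),
            MvPolynomial.rename Fin.succ (c k) * MvPolynomial.rename Fin.succ P ^ k
              * MvPolynomial.X 0 ^ (N - k)) * MvPolynomial.X 0 ^ a * dd n ^ b)
        = algebraMap (Rr n) (Kk n) (g * (MvPolynomial.rename Fin.succ P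
            * MvPolynomial.rename Fin.succ (∏ i : Fin n, MvPolynomial.X i)) ^ a
            * MvPolynomial.X 0 ^ N) := by
      rw [map_mul, map_mul, map_pow, map_pow, map_mul, map_mul, map_pow, map_pow]
      rw [show (algebraMap (Rr n) (Kk n)) (MvPolynomial.X (0 : Fin (n+1))) = XX n 0 from rfl]
      rw [← hχf, hφf, hχdd, ← hg]
      have hinv : (XX n 0)⁻¹ ^ a * XX n 0 ^ a = 1 := by
        rw [← mul_pow, inv_mul_cancel₀ (XX_ne_zero 0), one_pow]
      rw [map_mul (algebraMap (Rr n) (Kk n)) (MvPolynomial.rename Fin.succ P),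
        div_eq_mul_inv]
      linear_combination (φ y * ((algebraMap (Rr n) (Kk n)) ((MvPolynomial.rename Fin.succ) P)
        * (algebraMap (Rr n) (Kk n)) ((MvPolynomial.rename Fin.succ) (∏ i : Fin n, MvPolynomial.X i))) ^ a
        * XX n 0 ^ N * (algebraMap (Rr n) (Kk n)) (dd n) ^ b) * hinv
    have eq1 := amap_injective keyK
    rw [dd_eq] at eq1
    have eq2 := congrArg (MvPolynomial.finSuccEquiv ℤ n) eq1
    simp only [map_mul, map_pow, map_sum, E_rename, finSuccEquiv_X_zero] at eq2
    -- rewrite the left side of eq2 as a clean sum of monomials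
    have hL : ((∑ k ∈ Finset.range (N+1),
          Polynomial.C (c k) * Polynomial.C P ^ k * Polynomial.X ^ (N-k))
          * Polynomial.X ^ a
          * (Polynomial.X * Polynomial.C (∏ i : Fin n, MvPolynomial.X i : Ss n)) ^ b)
        = ∑ k ∈ Finset.range (N+1),
            Polynomial.C (c k * P ^ k * (∏ i : Fin n, MvPolynomial.X i : Ss n) ^ b)
              * Polynomial.X ^ (N - k + a + b) := by
      rw [Finset.sum_mul, Finset.sum_mul]
      refine Finset.sum_congr rfl fun k hk => ?_
      simp only [map_mul, map_pow]
      ring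
    rw [hL] at eq2
    -- coefficient extraction
    have hcoeff : ∀ k0, k0 < a → k0 ≤ N → MvPolynomial.eval ε (c k0) = 0 := by
      intro k0 hk0a hk0N
      have hLc : (∑ k ∈ Finset.range (N+1),
            Polynomial.C (c k * P ^ k * (∏ i : Fin n, MvPolynomial.X i : Ss n) ^ b)
              * Polynomial.X ^ (N - k + a + b)).coeff (N - k0 + a + b)
          = c k0 * P ^ k0 * (∏ i : Fin n, MvPolynomial.X i : Ss n) ^ b := by
        rw [Polynomial.finset_sum_coeff]
        rw [Finset.sum_congr rfl (fun k hk => ?_), Finset.sum_ite_eq' (Finset.range (N+1)) k0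
          (fun k => c k * P ^ k * (∏ i : Fin n, MvPolynomial.X i : Ss n) ^ b)]
        · simp [Nat.lt_succ_iff.mpr hk0N]
        · have hkN : k ≤ N := Nat.lt_succ_iff.mp (Finset.mem_range.mp hk)
          rw [Polynomial.coeff_C_mul, Polynomial.coeff_X_pow]
          by_cases h : k = k0
          · subst h; simp
          · have hne : ¬ (N - k0 + a + b = N - k + a + b) := by omega
            simp [h, hne, show ¬ (N - k0 = N - k) by omega]
      have hRc : ((MvPolynomial.finSuccEquiv ℤ n g)
            * (Polynomial.C P * Polynomial.C (∏ i : Fin n, MvPolynomial.X i : Ss n)) ^ a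
            * Polynomial.X ^ N).coeff (N - k0 + a + b)
          = (MvPolynomial.finSuccEquiv ℤ n g).coeff (a + b - k0)
            * (P ^ a * (∏ i : Fin n, MvPolynomial.X i : Ss n) ^ a) := by
        rw [show ((MvPolynomial.finSuccEquiv ℤ n g)
            * (Polynomial.C P * Polynomial.C (∏ i : Fin n, MvPolynomial.X i : Ss n)) ^ a
            * Polynomial.X ^ N)
          = ((MvPolynomial.finSuccEquiv ℤ n g)
            * Polynomial.C (P ^ a * (∏ i : Fin n, MvPolynomial.X i : Ss n) ^ a))
            * Polynomial.X ^ N from by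
          rw [mul_pow, ← Polynomial.C_pow, ← Polynomial.C_pow, ← Polynomial.C_mul, mul_assoc]]
        rw [Polynomial.coeff_mul_X_pow', if_pos (by omega : N ≤ N - k0 + a + b),
          Polynomial.coeff_mul_C, show N - k0 + a + b - N = a + b - k0 from by omega]
      have hcl := congrArg (fun p => Polynomial.coeff p (N - k0 + a + b)) eq2
      rw [hLc, hRc] at hcl
      obtain ⟨d, hd⟩ : ∃ d, a = k0 + d := ⟨a - k0, by omega⟩
      rw [hd, pow_add] at hcl
      have hc2 : c k0 * (∏ i : Fin n, MvPolynomial.X i : Ss n) ^ b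
          = (MvPolynomial.finSuccEquiv ℤ n g).coeff (k0 + d + b - k0)
            * (P ^ d * (∏ i : Fin n, MvPolynomial.X i : Ss n) ^ (k0 + d)) := by
        apply mul_left_cancel₀ (pow_ne_zero k0 hP)
        linear_combination hcl
      have hev2 := congrArg (MvPolynomial.eval ε) hc2
      simp only [map_mul, map_pow, hPε, zero_pow (show d ≠ 0 by omega), zero_mul,
        mul_zero] at hev2
      rcases mul_eq_zero.mp hev2 with h | h
      · exact h
      · exact absurd h (pow_ne_zero b hune)
    -- the evaluated polynomial
    have hψf : ψh n ε f = ∑ k ∈ Finset.range (N+1),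
        Polynomial.C (MvPolynomial.eval ε (c k)) * Polynomial.X ^ k := by
      conv_lhs => rw [hfd]
      rw [map_sum]
      refine Finset.sum_congr rfl fun k _ => ?_
      rw [map_mul, map_pow, ψ_rename, ψ_X0]
    obtain ⟨q, hq⟩ : (Polynomial.X : Polynomial ℤ) ^ a ∣ ψh n ε f := by
      rw [Polynomial.X_pow_dvd_iff]
      intro j hj
      rw [hψf, Polynomial.finset_sum_coeff]
      rw [Finset.sum_congr rfl (fun k hk => ?_), Finset.sum_ite_eq' (Finset.range (N+1)) j
        (fun k => MvPolynomial.eval ε (c k))]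
      · by_cases hjN : j ∈ Finset.range (N+1)
        · rw [if_pos hjN]
          exact hcoeff j hj (Nat.lt_succ_iff.mp (Finset.mem_range.mp hjN))
        · rw [if_neg hjN]
      · rw [Polynomial.coeff_C_mul, Polynomial.coeff_X_pow]
        by_cases h : k = j
        · subst h; simp
        · simp [h, Ne.symm h]
    -- conclude
    refine ⟨q * Polynomial.C (MvPolynomial.eval ε (∏ i : Fin n, MvPolynomial.X i : Ss n)) ^ a, ?_⟩
    have hXu : (Polynomial.X
        * Polynomial.C (MvPolynomial.eval ε (∏ i : Fin n, MvPolynomial.X i : Ss n))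
        : Polynomial ℤ) ≠ 0 :=
      mul_ne_zero Polynomial.X_ne_zero (Polynomial.C_ne_zero.mpr hune)
    have hXune : (algebraMap (Polynomial ℤ) Ft (Polynomial.X
        * Polynomial.C (MvPolynomial.eval ε (∏ i : Fin n, MvPolynomial.X i : Ss n)))) ≠ 0 := by
      rw [Ne, map_eq_zero_iff _ tmap_injective]; exact hXu
    apply mul_right_cancel₀ (pow_ne_zero a hXune)
    rw [← map_pow (algebraMap (Polynomial ℤ) Ft), ← map_mul (algebraMap (Polynomial ℤ) Ft)]
    have hcu : (Polynomial.C (MvPolynomial.eval ε (∏ i : Fin n, MvPolynomial.X i : Ss n))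
        : Polynomial ℤ) ^ a
        * Polynomial.C (MvPolynomial.eval ε (∏ i : Fin n, MvPolynomial.X i : Ss n)) ^ a = 1 := by
      rw [← mul_pow, ← map_mul, huu, map_one, one_pow]
    have hpoly : q * Polynomial.C (MvPolynomial.eval ε (∏ i : Fin n, MvPolynomial.X i : Ss n)) ^ a
        * (Polynomial.X
          * Polynomial.C (MvPolynomial.eval ε (∏ i : Fin n, MvPolynomial.X i : Ss n))) ^ a
        = Polynomial.X ^ a * q := by
      calc q * Polynomial.C (MvPolynomial.eval ε (∏ i : Fin n, MvPolynomial.X i : Ss n)) ^ a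
          * (Polynomial.X
            * Polynomial.C (MvPolynomial.eval ε (∏ i : Fin n, MvPolynomial.X i : Ss n))) ^ a
          = Polynomial.X ^ a * q
            * (Polynomial.C (MvPolynomial.eval ε (∏ i : Fin n, MvPolynomial.X i : Ss n)) ^ a
              * Polynomial.C (MvPolynomial.eval ε (∏ i : Fin n, MvPolynomial.X i : Ss n)) ^ a) := by
            rw [mul_pow]; ring
        _ = Polynomial.X ^ a * q := by rw [hcu, mul_one]
    rw [hpoly, ← hq, ← hev, hψdd, map_pow]
end

section
/- Let G be a finite simple graph with no isolated vertices and let A be a set of vertices of G whose closed neighbourhoods (a vertex together with all its neighbours) are pairwise disjoint. Then there exists a labelling s of the vertices outside A by values in {1, −1} such that for every v ∈ A, the number of neighbours w of v with s w = −1 is odd. (This is the combinatorial core of the corollary stating that for a quiver with no multiple arrows and no isolated vertices, any set of vertices with pairwise disjoint neighbourhoods can simultaneously be made polyamorous by a suitable specialisation.) -/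
/-- Let `G` be a finite simple graph with no isolated
vertices and let `A` be a set of vertices whose closed neighbourhoods are
pairwise disjoint.  Then there is a labelling `s` of the vertices outside `A`
by `1` or `-1` such that every `v ∈ A` has an odd number of neighbours
labelled `-1`. -/
theorem stmt_5 {V : Type*} [Fintype V] [DecidableEq V]
    (G : SimpleGraph V) [DecidableRel G.Adj]
    (hiso : ∀ v : V, ∃ w, G.Adj v w)
    (A : Finset V)
    (hdisj : ∀ u ∈ A, ∀ v ∈ A, u ≠ v →
      Disjoint (insert u (G.neighborFinset u)) (insert v (G.neighborFinset v))) :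
    ∃ s : V → ℤ,
      (∀ v, v ∉ A → s v = 1 ∨ s v = -1) ∧
      ∀ v ∈ A, Odd ((G.neighborFinset v).filter fun w => s w = -1).card := by
  choose f hf using hiso
  refine ⟨fun v => if v ∈ A.image f then -1 else 1, ?_, ?_⟩
  · intro v _
    by_cases h : v ∈ A.image f
    · simp [h]
    · simp [h]
  · intro v hv
    have hkey : (G.neighborFinset v).filter
        (fun w => (if w ∈ A.image f then (-1 : ℤ) else 1) = -1) = {f v} := by
      ext w
      simp only [Finset.mem_filter, Finset.mem_singleton, SimpleGraph.mem_neighborFinset]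
      constructor
      · rintro ⟨hadj, hval⟩
        have hmem : w ∈ A.image f := by
          by_contra h
          simp [h] at hval
        obtain ⟨u, hu, rfl⟩ := Finset.mem_image.mp hmem
        by_cases huv : u = v
        · rw [huv]
        · exfalso
          have h1 : f u ∈ insert u (G.neighborFinset u) := by
            simp [SimpleGraph.mem_neighborFinset, hf u]
          have h2 : f u ∈ insert v (G.neighborFinset v) := by
            simp [SimpleGraph.mem_neighborFinset, hadj]
          exact Finset.disjoint_left.mp (hdisj u hu v hv huv) h1 h2
      · rintro rfl
        refine ⟨hf v, ?_⟩
        have : f v ∈ A.image f := Finset.mem_image_of_mem f hv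
        simp [this]
    rw [hkey]
    simp
end

section
/- Let K be the field of fractions of MvPolynomial (Fin 2) ℤ, with x and y denoting the images of the two variables. Define f : ℕ → K by f 0 = x, f 1 = y, and f (k+2) = (1 + f (k+1)) / f k. Then f 2 = (1 + y)/x, f 3 = (1 + x + y)/(x·y), f 4 = (1 + x)/y, f 5 = x, f 6 = y; moreover f k ≠ 0 for all k, and f (k + 5) = f k for all k. (This is the 5-periodicity of the cluster exchange recurrence of type A₂, producing exactly the five cluster variables of the cluster algebra of type A₂.) -/
set_option maxHeartbeats 1000000
set_option synthInstance.maxHeartbeats 400000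


/-- The field `ℚ(x, y)`: the field of fractions of `ℤ[x, y]`. -/
abbrev K2 : Type := FractionRing (MvPolynomial (Fin 2) ℤ)

/-- The image of the first variable `x` in `K2`. -/
noncomputable def xv : K2 :=
  algebraMap (MvPolynomial (Fin 2) ℤ) K2 (MvPolynomial.X 0)

/-- The image of the second variable `y` in `K2`. -/
noncomputable def yv : K2 :=
  algebraMap (MvPolynomial (Fin 2) ℤ) K2 (MvPolynomial.X 1)

lemma K2_map_ne_zero {p : MvPolynomial (Fin 2) ℤ} (hp : p ≠ 0) :
    algebraMap (MvPolynomial (Fin 2) ℤ) K2 p ≠ 0 :=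
  (map_ne_zero_iff _ (IsFractionRing.injective _ _)).mpr hp

lemma poly_ne_of_eval (p : MvPolynomial (Fin 2) ℤ)
    (h : MvPolynomial.eval (fun _ => (0 : ℤ)) p ≠ 0) : p ≠ 0 := by
  intro h0; apply h; rw [h0]; simp

lemma xv_ne : xv ≠ 0 := K2_map_ne_zero (MvPolynomial.X_ne_zero 0)

lemma yv_ne : yv ≠ 0 := K2_map_ne_zero (MvPolynomial.X_ne_zero 1)

lemma one_add_xv_ne : (1 : K2) + xv ≠ 0 := by
  have : (1 : K2) + xv = algebraMap (MvPolynomial (Fin 2) ℤ) K2 (1 + MvPolynomial.X 0) := by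
    simp [xv]
  rw [this]
  exact K2_map_ne_zero (poly_ne_of_eval _ (by simp))

lemma one_add_yv_ne : (1 : K2) + yv ≠ 0 := by
  have : (1 : K2) + yv = algebraMap (MvPolynomial (Fin 2) ℤ) K2 (1 + MvPolynomial.X 1) := by
    simp [yv]
  rw [this]
  exact K2_map_ne_zero (poly_ne_of_eval _ (by simp))

lemma one_add_xv_yv_ne : (1 : K2) + xv + yv ≠ 0 := by
  have : (1 : K2) + xv + yv
      = algebraMap (MvPolynomial (Fin 2) ℤ) K2 (1 + MvPolynomial.X 0 + MvPolynomial.X 1) := by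
    simp [xv, yv]
  rw [this]
  exact K2_map_ne_zero (poly_ne_of_eval _ (by simp))

/-- The exchange recurrence of type `A₂`, namely
`f 0 = x`, `f 1 = y`, `f (k+2) = (1 + f (k+1)) / f k`, is 5-periodic, never
vanishes, and produces exactly the five cluster variables
`x, y, (1+y)/x, (1+x+y)/(xy), (1+x)/y`. -/
theorem stmt_6 (f : ℕ → K2) (h0 : f 0 = xv) (h1 : f 1 = yv)
    (hrec : ∀ k, f (k + 2) = (1 + f (k + 1)) / f k) :
    f 2 = (1 + yv) / xv ∧
    f 3 = (1 + xv + yv) / (xv * yv) ∧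
    f 4 = (1 + xv) / yv ∧
    f 5 = xv ∧
    f 6 = yv ∧
    (∀ k, f k ≠ 0) ∧
    (∀ k, f (k + 5) = f k) := by
  have hx := xv_ne
  have hy := yv_ne
  have h1x := one_add_xv_ne
  have h1y := one_add_yv_ne
  have h1xy := one_add_xv_yv_ne
  have h2 : f 2 = (1 + yv) / xv := by rw [hrec 0, h0, h1]
  have h3 : f 3 = (1 + xv + yv) / (xv * yv) := by
    rw [hrec 1, h2, h1]; field_simp
    try ring
  have h4 : f 4 = (1 + xv) / yv := by
    rw [hrec 2, h3, h2]; field_simp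
    try ring
  have h5 : f 5 = xv := by
    rw [hrec 3, h4, h3]; field_simp
    try ring
  have h6 : f 6 = yv := by
    rw [hrec 4, h5, h4]; field_simp
    try ring
  have hper : ∀ k, f (k + 5) = f k := by
    have key : ∀ k, f (k + 5) = f k ∧ f (k + 1 + 5) = f (k + 1) := by
      intro k
      induction k with
      | zero => exact ⟨by rw [h5, h0], by rw [show (1 : ℕ) + 5 = 6 from rfl, h6, h1]⟩
      | succ n ih =>
        refine ⟨ih.2, ?_⟩
        have : n + 1 + 1 + 5 = (n + 5) + 2 := by ring
        rw [this, hrec (n + 5), ih.1, ih.2, ← hrec n]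
    exact fun k => (key k).1
  have hmod : ∀ k, f k = f (k % 5) := by
    intro k
    induction k using Nat.strong_induction_on with
    | _ k ih =>
      rcases lt_or_ge k 5 with h | h
      · rw [Nat.mod_eq_of_lt h]
      · obtain ⟨m, rfl⟩ := Nat.exists_eq_add_of_le h
        rw [Nat.add_comm 5 m, hper m, ih m (by omega)]
        congr 1
        omega
  have hne : ∀ k, f k ≠ 0 := by
    intro k
    rw [hmod k]
    have : k % 5 < 5 := Nat.mod_lt _ (by norm_num)
    interval_cases h : k % 5
    · rw [h0]; exact hx
    · rw [h1]; exact hy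
    · rw [h2]; exact div_ne_zero h1y hx
    · rw [h3]; exact div_ne_zero h1xy (mul_ne_zero hx hy)
    · rw [h4]; exact div_ne_zero h1x hy
  exact ⟨h2, h3, h4, h5, h6, hne, hper⟩
end

section
/- Every cycle of length greater than 4 in the Farey graph has a chord; that is, if v₀, v₁, …, v_{L−1} are pairwise distinct vertices of the Farey graph with L ≥ 5 such that v_i is adjacent to v_{i+1} for all i (indices modulo L), then there exist indices i and j with v_i adjacent to v_j and with i, j non-consecutive modulo L (i.e. j ≢ i+1 and j ≢ i−1 (mod L)). -/
/-- The numerator of a vertex of the Farey graph: a rational `q` in lowest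
terms has numerator `q.num`, and `∞` (encoded as `none`) is `1/0`. -/
def fnum : Option ℚ → ℤ
  | none => 1
  | some q => q.num

/-- The denominator of a vertex of the Farey graph. -/
def fden : Option ℚ → ℤ
  | none => 0
  | some q => (q.den : ℤ)

/-- Adjacency in the Farey graph: two distinct vertices `p/q` and `r/s` are
adjacent iff `|p·s − q·r| = 1`. -/
def fareyAdj (u v : Option ℚ) : Prop :=
  u ≠ v ∧ |fnum u * fden v - fden u * fnum v| = 1

lemma fden_nonneg (u : Option ℚ) : 0 ≤ fden u := by
  cases u with
  | none => simp [fden]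
  | some q => exact Int.natCast_nonneg _

lemma farey_coprime (u : Option ℚ) : IsCoprime (fnum u) (fden u) := by
  cases u with
  | none => exact isCoprime_one_left
  | some q =>
    rw [Int.isCoprime_iff_gcd_eq_one]
    simpa [Int.gcd, fnum, fden, Nat.Coprime] using q.reduced

lemma farey_ext {u w : Option ℚ} (h1 : fnum u = fnum w) (h2 : fden u = fden w) :
    u = w := by
  cases u with
  | none =>
    cases w with
    | none => rfl
    | some r =>
      exfalso
      simp only [fden] at h2
      have := r.pos
      omega
  | some q =>
    cases w with
    | none =>
      exfalso
      simp only [fden] at h2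
      have := q.pos
      omega
    | some r =>
      simp only [fnum, fden] at h1 h2
      have hd : q.den = r.den := by exact_mod_cast h2
      exact congrArg some (Rat.ext h1 hd)

/-- Core arithmetic lemma: the two small-denominator Farey neighbours of `p/q`
are adjacent to each other. -/
lemma farey_key {p q a b c d : ℤ} (hq : 2 ≤ q) (hpq : IsCoprime p q)
    (hb0 : 0 ≤ b) (hbq : b ≤ q) (hd0 : 0 ≤ d) (hdq : d ≤ q)
    (h1 : |p * b - q * a| = 1) (h2 : |p * d - q * c| = 1)
    (hne : ¬(a = c ∧ b = d)) : |a * d - b * c| = 1 := by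
  have hq0 : q ≠ 0 := by omega
  rcases (abs_eq (by norm_num : (0:ℤ) ≤ 1)).mp h1 with e1 | e1 <;>
    rcases (abs_eq (by norm_num : (0:ℤ) ≤ 1)).mp h2 with e2 | e2
  · -- same sign (+1, +1)
    exfalso
    have h3 : p * (b - d) = q * (a - c) := by linear_combination e1 - e2
    have hdvd : q ∣ (b - d) := (hpq.symm).dvd_of_dvd_mul_left ⟨a - c, h3⟩
    obtain ⟨k, hk⟩ := hdvd
    have hk1 : k = -1 ∨ k = 0 ∨ k = 1 := by
      rcases lt_trichotomy k 0 with h | h | h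
      · left; nlinarith
      · right; left; exact h
      · right; right; nlinarith
    rcases hk1 with rfl | rfl | rfl
    · -- b = 0
      have hb : b = 0 := by omega
      have : q ∣ 1 := ⟨-a, by rw [hb] at e1; linarith⟩
      have := Int.le_of_dvd one_pos this
      omega
    · -- b = d, hence a = c
      have hb : b = d := by omega
      apply hne
      refine ⟨?_, hb⟩
      have : q * a = q * c := by rw [hb] at e1; linarith
      exact mul_left_cancel₀ hq0 this
    · -- d = 0
      have hd : d = 0 := by omega
      have : q ∣ 1 := ⟨-c, by rw [hd] at e2; linarith⟩
      have := Int.le_of_dvd one_pos this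
      omega
  · -- signs (+1, -1)
    have h3 : p * (b + d) = q * (a + c) := by linear_combination e1 + e2
    have hdvd : q ∣ (b + d) := (hpq.symm).dvd_of_dvd_mul_left ⟨a + c, h3⟩
    obtain ⟨k, hk⟩ := hdvd
    have hk1 : k = 0 ∨ k = 1 ∨ k = 2 := by
      rcases lt_trichotomy k 0 with h | h | h
      · exfalso; nlinarith
      · left; exact h
      · rcases lt_trichotomy k 2 with h' | h' | h'
        · right; left; omega
        · right; right; exact h'
        · exfalso; nlinarith
    rcases hk1 with rfl | rfl | rfl
    · exfalso
      have hb : b = 0 := by omega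
      have : q ∣ 1 := ⟨-a, by rw [hb] at e1; linarith⟩
      have := Int.le_of_dvd one_pos this
      omega
    · -- b + d = q, a + c = p
      have hbd : b + d = q := by omega
      have hac : a + c = p := by
        have : q * (a + c) = q * p := by rw [← h3, hbd]; ring
        exact mul_left_cancel₀ hq0 this
      have : a * d - b * c = -1 := by
        have hd' : d = q - b := by omega
        have hc' : c = p - a := by omega
        rw [hd', hc']
        linear_combination -e1
      rw [this]
      norm_num
    · exfalso
      have hb : b = q := by omega
      have : q ∣ 1 := ⟨p - a, by rw [hb] at e1; linarith [mul_comm p q]⟩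
      have := Int.le_of_dvd one_pos this
      omega
  · -- signs (-1, +1)
    have h3 : p * (b + d) = q * (a + c) := by linear_combination e1 + e2
    have hdvd : q ∣ (b + d) := (hpq.symm).dvd_of_dvd_mul_left ⟨a + c, h3⟩
    obtain ⟨k, hk⟩ := hdvd
    have hk1 : k = 0 ∨ k = 1 ∨ k = 2 := by
      rcases lt_trichotomy k 0 with h | h | h
      · exfalso; nlinarith
      · left; exact h
      · rcases lt_trichotomy k 2 with h' | h' | h'
        · right; left; omega
        · right; right; exact h'
        · exfalso; nlinarith
    rcases hk1 with rfl | rfl | rfl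
    · exfalso
      have hb : b = 0 := by omega
      have : q ∣ 1 := ⟨a, by rw [hb] at e1; linarith⟩
      have := Int.le_of_dvd one_pos this
      omega
    · have hbd : b + d = q := by omega
      have hac : a + c = p := by
        have : q * (a + c) = q * p := by rw [← h3, hbd]; ring
        exact mul_left_cancel₀ hq0 this
      have : a * d - b * c = 1 := by
        have hd' : d = q - b := by omega
        have hc' : c = p - a := by omega
        rw [hd', hc']
        linear_combination -e1
      rw [this]
      norm_num
    · exfalso
      have hb : b = q := by omega
      have : q ∣ 1 := ⟨a - p, by rw [hb] at e1; linarith [mul_comm p q]⟩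
      have := Int.le_of_dvd one_pos this
      omega
  · -- same sign (-1, -1)
    exfalso
    have h3 : p * (b - d) = q * (a - c) := by linear_combination e1 - e2
    have hdvd : q ∣ (b - d) := (hpq.symm).dvd_of_dvd_mul_left ⟨a - c, h3⟩
    obtain ⟨k, hk⟩ := hdvd
    have hk1 : k = -1 ∨ k = 0 ∨ k = 1 := by
      rcases lt_trichotomy k 0 with h | h | h
      · left; nlinarith
      · right; left; exact h
      · right; right; nlinarith
    rcases hk1 with rfl | rfl | rfl
    · have hb : b = 0 := by omega
      have : q ∣ 1 := ⟨a, by rw [hb] at e1; linarith⟩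
      have := Int.le_of_dvd one_pos this
      omega
    · have hb : b = d := by omega
      apply hne
      refine ⟨?_, hb⟩
      have : q * a = q * c := by rw [hb] at e1; linarith
      exact mul_left_cancel₀ hq0 this
    · have hd : d = 0 := by omega
      have : q ∣ 1 := ⟨c, by rw [hd] at e2; linarith⟩
      have := Int.le_of_dvd one_pos this
      omega

/-- Every cycle of length `L ≥ 5` in the Farey graph has a
chord: if `v : ZMod L → Option ℚ` is injective and `v i` is adjacent to
`v (i+1)` for all `i`, then some two non-consecutive vertices of the cycle
are adjacent. -/
theorem stmt_8 (L : ℕ) (hL : 5 ≤ L) (v : ZMod L → Option ℚ)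
    (hinj : Function.Injective v)
    (hadj : ∀ i : ZMod L, fareyAdj (v i) (v (i + 1))) :
    ∃ i j : ZMod L, fareyAdj (v i) (v j) ∧ j ≠ i + 1 ∧ j ≠ i - 1 := by
  have hLz : NeZero L := ⟨by omega⟩
  have hnz : ∀ n : ℕ, 0 < n → n < L → ((n : ℤ) : ZMod L) ≠ 0 := by
    intro n h1 h2 h
    have : ((n : ℕ) : ZMod L) = 0 := by exact_mod_cast h
    rw [ZMod.natCast_eq_zero_iff] at this
    have := Nat.le_of_dvd h1 this
    omega
  have h1z : (1 : ZMod L) ≠ 0 := by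
    have := hnz 1 (by omega) (by omega); simpa using this
  have h2z : (2 : ZMod L) ≠ 0 := by
    have := hnz 2 (by omega) (by omega); simpa using this
  have h3z : (3 : ZMod L) ≠ 0 := by
    have := hnz 3 (by omega) (by omega); simpa using this
  obtain ⟨i, hi⟩ := Finite.exists_max (fun j : ZMod L => fden (v j))

  set p := fnum (v i) with hp
  set q := fden (v i) with hqdef
  by_cases hq : 2 ≤ q
  · -- the neighbours of the max-denominator vertex give a chord
    have hine : v (i - 1) ≠ v (i + 1) := by
      intro h
      have h' := hinj h
      apply h2z
      linear_combination -h'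
    refine ⟨i - 1, i + 1, ⟨hine, ?_⟩, ?_, ?_⟩
    · -- adjacency
      have e1 := (hadj (i - 1)).2
      rw [show i - 1 + 1 = i by ring] at e1
      have e2 := (hadj i).2
      have h1 : |p * fden (v (i - 1)) - q * fnum (v (i - 1))| = 1 := by
        rw [show p * fden (v (i - 1)) - q * fnum (v (i - 1)) =
            -(fnum (v (i - 1)) * fden (v i) - fden (v (i - 1)) * fnum (v i)) by
          rw [hp, hqdef]; ring, abs_neg, e1]
      have h2 : |p * fden (v (i + 1)) - q * fnum (v (i + 1))| = 1 := by
        rw [hp, hqdef]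
        exact e2
      have hne' : ¬(fnum (v (i - 1)) = fnum (v (i + 1)) ∧
          fden (v (i - 1)) = fden (v (i + 1))) := by
        rintro ⟨ha, hb⟩
        exact hine (farey_ext ha hb)
      exact farey_key hq (farey_coprime (v i)) (fden_nonneg _) (hi (i - 1))
        (fden_nonneg _) (hi (i + 1)) h1 h2 hne'
    · intro h
      apply h1z
      linear_combination h
    · intro h
      apply h3z
      linear_combination h
  · -- all denominators are ≤ 1
    have hall : ∀ j, fden (v j) ≤ 1 := fun j => le_trans (hi j) (by omega)
    by_cases hinf : ∃ k, v k = none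
    · obtain ⟨k, hk⟩ := hinf
      have hk2 : v (k + 2) ≠ none := by
        intro h
        have : v (k + 2) = v k := by rw [h, hk]
        have := hinj this
        apply h2z
        linear_combination this
      obtain ⟨r, hr⟩ : ∃ r, v (k + 2) = some r := by
        cases h : v (k + 2) with
        | none => exact absurd h hk2
        | some r => exact ⟨r, rfl⟩
      have hden : fden (v (k + 2)) = 1 := by
        have h1 := hall (k + 2)
        rw [hr] at h1 ⊢
        simp only [fden] at h1 ⊢
        have := r.pos
        omega
      refine ⟨k, k + 2, ⟨?_, ?_⟩, ?_, ?_⟩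
      · intro h
        have := hinj h
        apply h2z
        linear_combination -this
      · rw [hk, hden]
        simp [fnum, fden]
      · intro h
        apply h1z
        linear_combination h
      · intro h
        apply h3z
        linear_combination h
    · -- every vertex is an integer: impossible for an injective cycle
      exfalso
      push_neg at hinf
      have hden1 : ∀ j, fden (v j) = 1 := by
        intro j
        cases h : v j with
        | none => exact absurd h (hinf j)
        | some r =>
          have h1 := hall j
          rw [h] at h1
          simp only [fden] at h1 ⊢
          have := r.pos
          omega
      set f : ZMod L → ℤ := fun j => fnum (v j) with hf
      have hstep : ∀ j, |f j - f (j + 1)| = 1 := by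
        intro j
        have := (hadj j).2
        rw [hden1, hden1] at this
        simpa using this
      have hfinj : Function.Injective f := by
        intro a b h
        exact hinj (farey_ext h (by rw [hden1, hden1]))
      -- consecutive steps have the same sign
      have hconst : ∀ j, f (j + 1) - f j = f (j + 2) - f (j + 1) := by
        intro j
        have s1 := hstep j
        have s2 := hstep (j + 1)
        rw [show j + 1 + 1 = j + 2 by ring] at s2
        have hne2 : f j ≠ f (j + 2) := by
          intro h
          have := hfinj h
          apply h2z
          linear_combination -this
        rcases (abs_eq (by norm_num : (0:ℤ) ≤ 1)).mp s1 with a1 | a1 <;>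
          rcases (abs_eq (by norm_num : (0:ℤ) ≤ 1)).mp s2 with a2 | a2 <;>
          omega
      -- the step is globally constant
      have hd0 : ∀ n : ℕ, f ((n : ZMod L) + 1) - f (n : ZMod L) = f 1 - f 0 := by
        intro n
        induction n with
        | zero => norm_num
        | succ m ih =>
          have hc := hconst (m : ZMod L)
          push_cast
          rw [show ((m : ZMod L) + 1) + 1 = (m : ZMod L) + 2 by ring]
          rw [← hc]
          exact ih
      -- telescoping
      have hT : ∀ n : ℕ, f (n : ZMod L) = f 0 + n * (f 1 - f 0) := by
        intro n
        induction n with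
        | zero => norm_num
        | succ m ih =>
          have := hd0 m
          push_cast
          push_cast at ih
          linarith
      have hLL := hT L
      rw [ZMod.natCast_self] at hLL
      have heq : (L : ℤ) * (f 1 - f 0) = 0 := by linarith
      have hs0 := hstep 0
      rw [zero_add] at hs0
      rcases (abs_eq (by norm_num : (0:ℤ) ≤ 1)).mp hs0 with a | a
      · rw [show f 1 - f 0 = -1 by omega] at heq
        simp at heq
        omega
      · rw [show f 1 - f 0 = 1 by omega] at heq
        simp at heq
        omega
end

section
/- For every m ∈ ℤ, the 5-periodic function a : ℤ → ℤ determined by a(0) = −1−m, a(1) = 0, a(2) = m, a(3) = −1, a(4) = −1 and a(i+5) = a(i) for all i, satisfies a(i)·a(i+1) = 1 + a(i−2) for all i ∈ ℤ. (Hence for each integer m these sequences form a tame integral frieze pattern with two nontrivial rows, namely the one obtained by specialising the cluster algebra of type A₂ at x₂ = −1 and x₁ = m.) -/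
/-- For every `m : ℤ`, the 5-periodic sequence with period
block `(-1-m, 0, m, -1, -1)` satisfies the frieze relation
`a i * a (i+1) = 1 + a (i-2)` for all `i : ℤ`. -/
theorem stmt_9 (m : ℤ) (a : ℤ → ℤ)
    (h0 : a 0 = -1 - m) (h1 : a 1 = 0) (h2 : a 2 = m)
    (h3 : a 3 = -1) (h4 : a 4 = -1)
    (hper : ∀ i : ℤ, a (i + 5) = a i) :
    ∀ i : ℤ, a i * a (i + 1) = 1 + a (i - 2) := by
  have hadd : ∀ (k r : ℤ), a (r + 5 * k) = a r := by
    intro k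
    induction k using Int.induction_on with
    | zero => simp
    | succ n ih =>
      intro r
      have := hper (r + 5 * n)
      rw [show r + 5 * (n + 1) = r + 5 * n + 5 by ring, this, ih]
    | pred n ih =>
      intro r
      have := hper (r + 5 * (-n - 1))
      rw [show r + 5 * (-(n:ℤ) - 1) + 5 = r + 5 * (-n) by ring] at this
      rw [← this, ih]
  have key : ∀ i : ℤ, a i = a (i % 5) := by
    intro i
    conv_lhs => rw [show i = i % 5 + 5 * (i / 5) by omega]
    exact hadd _ _
  intro i
  rw [key i, key (i + 1), key (i - 2)]
  have h : i % 5 = 0 ∨ i % 5 = 1 ∨ i % 5 = 2 ∨ i % 5 = 3 ∨ i % 5 = 4 := by omega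
  rcases h with h | h | h | h | h <;>
    [ (rw [h, show (i+1) % 5 = 1 by omega, show (i-2) % 5 = 3 by omega]);
      (rw [h, show (i+1) % 5 = 2 by omega, show (i-2) % 5 = 4 by omega]);
      (rw [h, show (i+1) % 5 = 3 by omega, show (i-2) % 5 = 0 by omega]);
      (rw [h, show (i+1) % 5 = 4 by omega, show (i-2) % 5 = 1 by omega]);
      (rw [h, show (i+1) % 5 = 0 by omega, show (i-2) % 5 = 2 by omega])] <;>
    simp [h0, h1, h2, h3, h4] <;> ring
end

section
/- Let a : ℤ → ℤ satisfy a(i)·a(i+1) = 1 + a(i−2) for all i ∈ ℤ. Then a is 5-periodic, and either a is a translate of the 5-periodic sequence with period block (1, 2, 2, 1, 3), or there exists m ∈ ℤ such that a is a translate of the 5-periodic sequence with period block (−1−m, 0, m, −1, −1). (This is the classification: any integral tame frieze with two nontrivial rows is either positive — hence the unique Conway–Coxeter frieze with two nontrivial rows — or belongs, up to translation and glide reflection, to the one-parameter family obtained by specialising the cluster algebra of type A₂ at x₂ = −1.) -/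
/-- The 5-periodic sequence `ℤ → ℤ` with period block `v 0, v 1, v 2, v 3, v 4`. -/
def periodic5 (v : Fin 5 → ℤ) : ℤ → ℤ := fun i =>
  v ⟨(i % 5).toNat, by omega⟩

private lemma per5_eval (v : Fin 5 → ℤ) (n : ℤ) (r : ℕ) (h5 : r < 5) (hr : n % 5 = r) :
    periodic5 v n = v ⟨r, h5⟩ := by
  refine congrArg v (Fin.ext ?_)
  show (n % 5).toNat = r
  omega

private lemma per5_shift (v : Fin 5 → ℤ) (n : ℤ) : periodic5 v (n + 5) = periodic5 v n := by
  refine congrArg v (Fin.ext ?_)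
  show ((n + 5) % 5).toNat = (n % 5).toNat
  omega

private lemma R (a : ℤ → ℤ) (h : ∀ i : ℤ, a i * a (i + 1) = 1 + a (i - 2))
    (n m p : ℤ) (e1 : m = n + 1) (e2 : p = n - 2) : a n * a m = 1 + a p := by
  subst e1; subst e2; exact h n

section Frieze

variable (a : ℤ → ℤ) (h : ∀ i : ℤ, a i * a (i + 1) = 1 + a (i - 2))
include h

private lemma zback {k : ℤ} (hk : a k = 0) :
    a (k - 2) = -1 ∧ a (k - 3) = -1 ∧ a (k - 5) = 0 := by
  have t0 := R a h k (k + 1) (k - 2) rfl rfl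
  rw [hk, zero_mul] at t0
  have t1 := R a h (k - 1) k (k - 3) (by ring) (by ring)
  rw [hk, mul_zero] at t1
  have e2 : a (k - 2) = -1 := by omega
  have e3 : a (k - 3) = -1 := by omega
  have t2 := R a h (k - 3) (k - 2) (k - 5) (by ring) (by ring)
  rw [e2, e3] at t2
  norm_num at t2
  exact ⟨e2, e3, by omega⟩

private lemma zpair {k : ℤ} (hk : a k = 0) : a (k + 2) = -1 ∧ a (k + 3) = -1 := by
  have t3 := R a h (k + 2) (k + 3) k (by ring) (by ring)
  rw [hk] at t3
  norm_num at t3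
  rcases Int.mul_eq_one_iff_eq_one_or_neg_one.mp t3 with ⟨e2, e3⟩ | ⟨e2, e3⟩
  · exfalso
    have t4 := R a h (k + 4) (k + 5) (k + 2) (by ring) (by ring)
    have t5 := R a h (k + 5) (k + 6) (k + 3) (by ring) (by ring)
    have t6 := R a h (k + 6) (k + 7) (k + 4) (by ring) (by ring)
    have t7 := R a h (k + 7) (k + 8) (k + 5) (by ring) (by ring)
    rw [e2] at t4
    rw [e3] at t5
    norm_num at t4 t5
    have hy0 : a (k + 5) ≠ 0 := by
      intro e
      rw [e, mul_zero] at t4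
      omega
    have hd : a (k + 5) ∣ 2 := ⟨a (k + 6), t5.symm⟩
    have hb1 : a (k + 5) ≤ 2 := Int.le_of_dvd (by norm_num) hd
    have hb2 : -2 ≤ a (k + 5) := by
      have := Int.le_of_dvd (by norm_num : (0:ℤ) < 2) ((neg_dvd).mpr hd)
      omega
    have hy : a (k + 5) = -2 ∨ a (k + 5) = -1 ∨ a (k + 5) = 1 ∨ a (k + 5) = 2 := by omega
    rcases hy with e | e | e | e <;> rw [e] at t4 t5 t7
    · have ex : a (k + 4) = -1 := by omega
      have ez : a (k + 6) = -1 := by omega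
      rw [ez, ex] at t6
      have ew : a (k + 7) = 0 := by omega
      rw [ew, zero_mul] at t7
      omega
    · have ex : a (k + 4) = -2 := by omega
      have ez : a (k + 6) = -2 := by omega
      rw [ez, ex] at t6
      omega
    · have ex : a (k + 4) = 2 := by omega
      have ez : a (k + 6) = 2 := by omega
      rw [ez, ex] at t6
      omega
    · have ex : a (k + 4) = 1 := by omega
      have ez : a (k + 6) = 1 := by omega
      rw [ez, ex] at t6
      have ew : a (k + 7) = 2 := by omega
      rw [ew] at t7
      omega
  · exact ⟨e2, e3⟩

private lemma znext {k : ℤ} (hk : a k = 0) : a (k + 5) = 0 := by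
  obtain ⟨p2, p3⟩ := zpair a h hk
  have t4 := R a h (k + 4) (k + 5) (k + 2) (by ring) (by ring)
  have t5 := R a h (k + 5) (k + 6) (k + 3) (by ring) (by ring)
  have t6 := R a h (k + 6) (k + 7) (k + 4) (by ring) (by ring)
  rw [p2] at t4
  rw [p3] at t5
  norm_num at t4 t5
  by_contra hne
  have h4 : a (k + 4) = 0 := by
    rcases t4 with e | e
    · exact e
    · exact absurd e hne
  have h6 : a (k + 6) = 0 := by
    rcases t5 with e | e
    · exact absurd e hne
    · exact e
  rw [h6, zero_mul] at t6
  omega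

private lemma z4 {k : ℤ} (hk : a k = 0) : a (k + 4) = -1 - a (k + 1) := by
  obtain ⟨p2, p3⟩ := zpair a h hk
  have t := R a h (k + 3) (k + 4) (k + 1) (by ring) (by ring)
  rw [p3] at t
  omega

private lemma z6 {k : ℤ} (hk : a k = 0) : a (k + 6) = a (k + 1) := by
  have h5 : a (k + 5) = 0 := znext a h hk
  have p7 := (zpair a h h5).1
  rw [show k + 5 + 2 = k + 7 by ring] at p7
  have h4 := z4 a h hk
  have t6 := R a h (k + 6) (k + 7) (k + 4) (by ring) (by ring)
  rw [p7, h4] at t6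
  omega

end Frieze

/-- Any `a : ℤ → ℤ` satisfying the frieze relation
`a i * a (i+1) = 1 + a (i-2)` for all `i` is 5-periodic, and is either a
translate of the 5-periodic sequence with period block `(1, 2, 2, 1, 3)`
(the unique Conway–Coxeter frieze with two nontrivial rows), or, for some
`m : ℤ`, a translate of the 5-periodic sequence with period block
`(-1-m, 0, m, -1, -1)`. -/
theorem stmt_10 (a : ℤ → ℤ)
    (h : ∀ i : ℤ, a i * a (i + 1) = 1 + a (i - 2)) :
    (∀ i : ℤ, a (i + 5) = a i) ∧
      ((∃ c : ℤ, ∀ i : ℤ, a i = periodic5 ![1, 2, 2, 1, 3] (i + c)) ∨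
        (∃ m c : ℤ, ∀ i : ℤ, a i = periodic5 ![-1 - m, 0, m, -1, -1] (i + c))) := by
  rcases em (∃ k, a k = 0) with ⟨k, hk⟩ | hz
  · -- family 2
    have zall : ∀ q : ℤ, a (k + 5 * q) = 0 := by
      intro q
      induction q using Int.induction_on with
      | zero => rw [show k + 5 * (0:ℤ) = k by ring]; exact hk
      | succ i ih =>
        have := znext a h ih
        rw [show k + 5 * ((i:ℤ) + 1) = k + 5 * (i:ℤ) + 5 by ring]
        exact this
      | pred i ih =>
        have := (zback a h ih).2.2
        rw [show k + 5 * (-(i:ℤ) - 1) = k + 5 * (-(i:ℤ)) - 5 by ring]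
        exact this
    have ones : ∀ q : ℤ, a (k + 5 * q + 1) = a (k + 1) := by
      intro q
      induction q using Int.induction_on with
      | zero => rw [show k + 5 * (0:ℤ) + 1 = k + 1 by ring]
      | succ i ih =>
        have h6 := z6 a h (zall i)
        rw [show k + 5 * ((i:ℤ) + 1) + 1 = k + 5 * (i:ℤ) + 6 by ring, h6]
        exact ih
      | pred i ih =>
        have h6 := z6 a h (zall (-(i:ℤ) - 1))
        rw [show k + 5 * (-(i:ℤ) - 1) + 6 = k + 5 * (-(i:ℤ)) + 1 by ring] at h6
        rw [← h6]
        exact ih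
    have main : ∀ n : ℤ,
        a n = periodic5 ![-1 - a (k + 1), 0, a (k + 1), -1, -1] (n + (1 - k)) := by
      intro n
      set q : ℤ := (n - k) / 5 with hq
      have hz0 : a (k + 5 * q) = 0 := zall q
      have hcase : (n - k) % 5 = 0 ∨ (n - k) % 5 = 1 ∨ (n - k) % 5 = 2 ∨
          (n - k) % 5 = 3 ∨ (n - k) % 5 = 4 := by omega
      rcases hcase with e | e | e | e | e
      · rw [per5_eval _ _ 1 (by norm_num) (by omega)]
        have := hz0
        rw [show k + 5 * q = n by omega] at this
        exact this.trans rfl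
      · rw [per5_eval _ _ 2 (by norm_num) (by omega)]
        have := ones q
        rw [show k + 5 * q + 1 = n by omega] at this
        exact this.trans rfl
      · rw [per5_eval _ _ 3 (by norm_num) (by omega)]
        have := (zpair a h hz0).1
        rw [show k + 5 * q + 2 = n by omega] at this
        exact this.trans rfl
      · rw [per5_eval _ _ 4 (by norm_num) (by omega)]
        have := (zpair a h hz0).2
        rw [show k + 5 * q + 3 = n by omega] at this
        exact this.trans rfl
      · rw [per5_eval _ _ 0 (by norm_num) (by omega)]
        have := z4 a h hz0
        rw [ones q] at this
        rw [show k + 5 * q + 4 = n by omega] at this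
        exact this.trans rfl
    refine ⟨?_, Or.inr ⟨a (k + 1), 1 - k, main⟩⟩
    intro i
    rw [main i, main (i + 5), show i + 5 + (1 - k) = i + (1 - k) + 5 by ring, per5_shift]
  · -- family 1
    push_neg at hz
    have hn1 : ∀ i : ℤ, a i ≠ -1 := by
      intro i e
      have t := R a h (i + 2) (i + 3) i (by ring) (by ring)
      rw [e] at t
      norm_num at t
      rcases t with e' | e'
      · exact hz _ e'
      · exact hz _ e'
    have hone : ∃ k, a k = 1 := by
      by_contra hone
      push_neg at hone
      have h2 : ∀ i : ℤ, 2 ≤ |a i| := by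
        intro i
        have h0 := hz i; have hm := hn1 i; have h1 := hone i
        rcases abs_choice (a i) with e | e <;>
          · have hnn := abs_nonneg (a i)
            rw [e] at hnn ⊢
            omega
      have step : ∀ n : ℤ, 2 * |a (n + 3)| ≤ 1 + |a n| := by
        intro n
        have t := R a h (n + 2) (n + 3) n (by ring) (by ring)
        have habs : |a (n + 2)| * |a (n + 3)| = |1 + a n| := by rw [← abs_mul, t]
        have h1 : |1 + a n| ≤ 1 + |a n| := by
          calc |1 + a n| ≤ |(1:ℤ)| + |a n| := abs_add_le 1 (a n)
          _ = 1 + |a n| := by norm_num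
        nlinarith [h2 (n + 2), abs_nonneg (a (n + 3))]
      have desc : ∀ M : ℕ, ∀ n : ℤ,
          |a n| ≤ M → |a (n + 1)| ≤ M → |a (n + 2)| ≤ M → False := by
        intro M
        induction M using Nat.strong_induction_on with
        | _ M IH =>
          intro n b0 b1 b2
          have s0 := step n
          have s1 := step (n + 1)
          rw [show n + 1 + 3 = n + 4 by ring] at s1
          have s2 := step (n + 2)
          rw [show n + 2 + 3 = n + 5 by ring] at s2
          by_cases hM : M ≤ 2
          · have := h2 n
            have := h2 (n + 2)
            have := h2 (n + 3)
            omega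
          · refine IH ((M + 1) / 2) (by omega) (n + 3) (by omega) ?_ ?_
            · rw [show n + 3 + 1 = n + 4 by ring]
              have := h2 (n + 1)
              omega
            · rw [show n + 3 + 2 = n + 5 by ring]
              have := h2 (n + 2)
              omega
      have hA : |a 0| ≤ |a 0| ⊔ |a 1| ⊔ |a 2| :=
        le_trans (le_max_left _ _) (le_max_left _ _)
      have hB : |a 1| ≤ |a 0| ⊔ |a 1| ⊔ |a 2| :=
        le_trans (le_max_right _ _) (le_max_left _ _)
      have hC : |a 2| ≤ |a 0| ⊔ |a 1| ⊔ |a 2| := le_max_right _ _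
      refine desc (|a 0| ⊔ |a 1| ⊔ |a 2|).toNat 0 (by omega) ?_ ?_
      · rw [show (0:ℤ) + 1 = 1 by norm_num]; omega
      · rw [show (0:ℤ) + 2 = 2 by norm_num]; omega
    -- pair lemma
    have pairs : ∀ j : ℤ, a j = 1 →
        (a (j + 2) = 1 ∧ a (j + 3) = 2) ∨ (a (j + 2) = 2 ∧ a (j + 3) = 1) := by
      intro j e
      have t := R a h (j + 2) (j + 3) j (by ring) (by ring)
      rw [e] at t
      norm_num at t
      have hd : a (j + 2) ∣ 2 := ⟨a (j + 3), t.symm⟩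
      have h1 : a (j + 2) ≤ 2 := Int.le_of_dvd (by norm_num) hd
      have h2' : -2 ≤ a (j + 2) := by
        have := Int.le_of_dvd (by norm_num : (0:ℤ) < 2) ((neg_dvd).mpr hd)
        omega
      have hx0 := hz (j + 2)
      have hx1 := hn1 (j + 2)
      have hy1 := hn1 (j + 3)
      have hc : a (j + 2) = 1 ∨ a (j + 2) = 2 ∨ a (j + 2) = -2 := by omega
      rcases hc with e2 | e2 | e2 <;> rw [e2] at t
      · exact Or.inl ⟨e2, by omega⟩
      · exact Or.inr ⟨e2, by omega⟩
      · exfalso; omega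
    -- main propagation lemma
    have LL : ∀ n : ℤ, a n = 1 → a (n + 2) = 2 → a (n + 3) = 1 →
        (a (n + 1) = 2 ∧ a (n + 4) = 3) ∧
          (a (n + 5) = 1 ∧ a (n + 7) = 2 ∧ a (n + 8) = 1) ∧
          (a (n - 5) = 1 ∧ a (n - 3) = 2 ∧ a (n - 2) = 1) := by
      intro n e0 e2 e3
      have t4 := R a h (n + 4) (n + 5) (n + 2) (by ring) (by ring)
      have t5 := R a h (n + 5) (n + 6) (n + 3) (by ring) (by ring)
      rw [e2] at t4
      rw [e3] at t5
      norm_num at t4 t5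
      have hd2 : a (n + 5) ∣ 2 := ⟨a (n + 6), t5.symm⟩
      have hd3 : a (n + 5) ∣ 3 := ⟨a (n + 4), by rw [← t4]; ring⟩
      have hu : a (n + 5) ∣ 1 := by
        have : a (n + 5) ∣ (3 - 2) := dvd_sub hd3 hd2
        simpa using this
      have e5 : a (n + 5) = 1 := by
        rcases Int.isUnit_iff.mp (isUnit_of_dvd_one hu) with e | e
        · exact e
        · exact absurd e (hn1 _)
      rw [e5] at t4 t5
      have e4 : a (n + 4) = 3 := by omega
      have e6 : a (n + 6) = 2 := by omega
      have t6 := R a h (n + 3) (n + 4) (n + 1) (by ring) (by ring)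
      rw [e3, e4] at t6
      have e1 : a (n + 1) = 2 := by omega
      have t7 := R a h (n + 6) (n + 7) (n + 4) (by ring) (by ring)
      rw [e6, e4] at t7
      have e7 : a (n + 7) = 2 := by omega
      have t8 := R a h (n + 7) (n + 8) (n + 5) (by ring) (by ring)
      rw [e7, e5] at t8
      have e8 : a (n + 8) = 1 := by omega
      have t9 := h n
      rw [e0, e1] at t9
      have e_2 : a (n - 2) = 1 := by omega
      have t10 := R a h (n + 1) (n + 2) (n - 1) (by ring) (by ring)
      rw [e1, e2] at t10
      have e_1 : a (n - 1) = 3 := by omega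
      have t11 := R a h (n - 1) n (n - 3) (by ring) (by ring)
      rw [e_1, e0] at t11
      have e_3 : a (n - 3) = 2 := by omega
      have t12 := R a h (n - 3) (n - 2) (n - 5) (by ring) (by ring)
      rw [e_3, e_2] at t12
      have e_5 : a (n - 5) = 1 := by omega
      exact ⟨⟨e1, e4⟩, ⟨e5, e7, e8⟩, ⟨e_5, e_3, e_2⟩⟩
    obtain ⟨k, hk1⟩ := hone
    have start : ∃ j : ℤ, a j = 1 ∧ a (j + 2) = 2 ∧ a (j + 3) = 1 := by
      rcases pairs k hk1 with ⟨p2, p3⟩ | ⟨p2, p3⟩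
      · refine ⟨k + 2, p2, ?_⟩
        rcases pairs (k + 2) p2 with ⟨q2, q3⟩ | ⟨q2, q3⟩
        · exfalso
          rw [show k + 2 + 3 = k + 5 by ring] at q3
          have t := R a h (k + 5) (k + 6) (k + 3) (by ring) (by ring)
          rw [q3, p3] at t
          omega
        · exact ⟨q2, q3⟩
      · exact ⟨k, hk1, p2, p3⟩
    obtain ⟨j, hj1, hj2, hj3⟩ := start
    have Lhyp : ∀ q : ℤ,
        a (j + 5 * q) = 1 ∧ a (j + 5 * q + 2) = 2 ∧ a (j + 5 * q + 3) = 1 := by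
      intro q
      induction q using Int.induction_on with
      | zero =>
        have e : j + 5 * (0:ℤ) = j := by ring
        rw [e]
        exact ⟨hj1, hj2, hj3⟩
      | succ i ih =>
        obtain ⟨ih1, ih2, ih3⟩ := ih
        obtain ⟨u1, u2, u3⟩ := (LL (j + 5 * (i:ℤ)) ih1 ih2 ih3).2.1
        refine ⟨?_, ?_, ?_⟩
        · rw [show j + 5 * ((i:ℤ) + 1) = j + 5 * (i:ℤ) + 5 by ring]; exact u1
        · rw [show j + 5 * ((i:ℤ) + 1) + 2 = j + 5 * (i:ℤ) + 7 by ring]; exact u2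
        · rw [show j + 5 * ((i:ℤ) + 1) + 3 = j + 5 * (i:ℤ) + 8 by ring]; exact u3
      | pred i ih =>
        obtain ⟨ih1, ih2, ih3⟩ := ih
        obtain ⟨u1, u2, u3⟩ := (LL (j + 5 * (-(i:ℤ))) ih1 ih2 ih3).2.2
        refine ⟨?_, ?_, ?_⟩
        · rw [show j + 5 * (-(i:ℤ) - 1) = j + 5 * (-(i:ℤ)) - 5 by ring]; exact u1
        · rw [show j + 5 * (-(i:ℤ) - 1) + 2 = j + 5 * (-(i:ℤ)) - 3 by ring]; exact u2
        · rw [show j + 5 * (-(i:ℤ) - 1) + 3 = j + 5 * (-(i:ℤ)) - 2 by ring]; exact u3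
    have main : ∀ n : ℤ, a n = periodic5 ![1, 2, 2, 1, 3] (n + (-j)) := by
      intro n
      set q : ℤ := (n - j) / 5 with hq
      obtain ⟨L1, L2, L3⟩ := Lhyp q
      obtain ⟨⟨v1, v4⟩, -, -⟩ := LL (j + 5 * q) L1 L2 L3
      have hcase : (n - j) % 5 = 0 ∨ (n - j) % 5 = 1 ∨ (n - j) % 5 = 2 ∨
          (n - j) % 5 = 3 ∨ (n - j) % 5 = 4 := by omega
      rcases hcase with e | e | e | e | e
      · rw [per5_eval _ _ 0 (by norm_num) (by omega)]
        rw [show j + 5 * q = n by omega] at L1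
        exact L1.trans rfl
      · rw [per5_eval _ _ 1 (by norm_num) (by omega)]
        rw [show j + 5 * q + 1 = n by omega] at v1
        exact v1.trans rfl
      · rw [per5_eval _ _ 2 (by norm_num) (by omega)]
        rw [show j + 5 * q + 2 = n by omega] at L2
        exact L2.trans rfl
      · rw [per5_eval _ _ 3 (by norm_num) (by omega)]
        rw [show j + 5 * q + 3 = n by omega] at L3
        exact L3.trans rfl
      · rw [per5_eval _ _ 4 (by norm_num) (by omega)]
        rw [show j + 5 * q + 4 = n by omega] at v4
        exact v4.trans rfl
    refine ⟨?_, Or.inl ⟨-j, main⟩⟩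
    intro i
    rw [main i, main (i + 5), show i + 5 + (-j) = i + (-j) + 5 by ring, per5_shift]
end
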